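/- (Tractor characterisation, 'easy' direction) Let g be a metric on M and split the standard tractor bundle T = R ⊕ TM ⊕ R with tractor connection ∇̄_a(ρ, X^b, σ) = (∇_aρ − P_{ab}X^b, ∇_aX^b + ρδ_a{}^b + σP_a{}^b, ∇_aσ − g_{ab}X^b). For a nowhere-vanishing null vector field K, the rank-2 subbundle H spanned by (0,K,0) and (0,0,1) is parallel for ∇̄ if and only if g is a pure radiation metric with parallel rays spanned by K. -/

import Mathlib

/- A coordinate-chart framework for pseudo-Riemannian geometry on ℝⁿ:
metric, Christoffel symbols, covariant derivatives, curvature, Ricci,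
Schouten, Weyl, Cotton and Bach tensors, and the standard tractor
connection, all written in index notation. -/

noncomputable section

open scoped BigOperators

/-- Points of the chart ℝⁿ. -/
abbrev Pt (n : ℕ) := Fin n → ℝ

/-- Partial derivative of a scalar function in the coordinate direction `a`. -/
def pd {n : ℕ} (a : Fin n) (f : Pt n → ℝ) (x : Pt n) : ℝ :=
  fderiv ℝ f x (Pi.single a 1)

/-- A smooth vector field. -/
def SmoothVF {n : ℕ} (K : Pt n → Pt n) : Prop := ∀ b, ContDiff ℝ (⊤ : ℕ∞) (fun x => K x b)

/-- A smooth one-form. -/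
def SmoothForm {n : ℕ} (f : Pt n → Fin n → ℝ) : Prop := ∀ b, ContDiff ℝ (⊤ : ℕ∞) (fun x => f x b)

/-- A pseudo-Riemannian metric (of arbitrary signature) in a global
coordinate chart on ℝⁿ, given by its components `g x a b`, together with the
components `ginv` of its pointwise inverse. -/
structure MetricG (n : ℕ) where
  g : Pt n → Fin n → Fin n → ℝ
  ginv : Pt n → Fin n → Fin n → ℝ
  symm : ∀ x a b, g x a b = g x b a
  smooth : ∀ a b, ContDiff ℝ (⊤ : ℕ∞) (fun x => g x a b)
  inv_mul : ∀ x a c, (∑ b, ginv x a b * g x b c) = if a = c then (1:ℝ) else 0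

namespace MetricG

variable {n : ℕ} (G : MetricG n)

/-- The inner product of two tangent vectors at `x`. -/
def ip (x : Pt n) (X Y : Pt n) : ℝ := ∑ a, ∑ b, G.g x a b * X a * Y b

/-- Christoffel symbols Γ^c_{ab} of the Levi-Civita connection. -/
def Γ (c a b : Fin n) (x : Pt n) : ℝ :=
  (1/2) * ∑ d, G.ginv x c d *
    (pd a (fun y => G.g y d b) x + pd b (fun y => G.g y d a) x - pd d (fun y => G.g y a b) x)

/-- Covariant derivative (∇_a X)^b of a vector field. -/
def covVec (X : Pt n → Pt n) (a b : Fin n) (x : Pt n) : ℝ :=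
  pd a (fun y => X y b) x + ∑ c, G.Γ b a c x * X x c

/-- Covariant derivative ∇_a ω_b of a one-form. -/
def cov1 (ω : Pt n → Fin n → ℝ) (a b : Fin n) (x : Pt n) : ℝ :=
  pd a (fun y => ω y b) x - ∑ e, G.Γ e a b x * ω x e

/-- Covariant derivative ∇_a T_{bc} of a (0,2)-tensor field. -/
def cov2 (T : Pt n → Fin n → Fin n → ℝ) (a b c : Fin n) (x : Pt n) : ℝ :=
  pd a (fun y => T y b c) x - ∑ e, G.Γ e a b x * T x e c - ∑ e, G.Γ e a c x * T x b e

/-- Covariant derivative ∇_a T_{bcd} of a (0,3)-tensor field. -/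
def cov3 (T : Pt n → Fin n → Fin n → Fin n → ℝ) (a b c d : Fin n) (x : Pt n) : ℝ :=
  pd a (fun y => T y b c d) x - ∑ e, G.Γ e a b x * T x e c d
    - ∑ e, G.Γ e a c x * T x b e d - ∑ e, G.Γ e a d x * T x b c e

/-- Curvature tensor R_{ab}{}^c{}_d, with the convention
`(∇_a∇_b − ∇_b∇_a)X^c = R_{ab}{}^c{}_d X^d`. -/
def Riem (a b c d : Fin n) (x : Pt n) : ℝ :=
  pd a (fun y => G.Γ c b d y) x - pd b (fun y => G.Γ c a d y) x
    + ∑ e, (G.Γ c a e x * G.Γ e b d x - G.Γ c b e x * G.Γ e a d x)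

/-- (4,0)-curvature tensor R_{abcd} = g_{ce} R_{ab}{}^e{}_d. -/
def Riem4 (a b c d : Fin n) (x : Pt n) : ℝ :=
  ∑ e, G.g x c e * G.Riem a b e d x

/-- Ricci tensor R_{bd} = R_{cb}{}^c{}_d. -/
def Ricci (b d : Fin n) (x : Pt n) : ℝ := ∑ c, G.Riem c b c d x

/-- Scalar curvature R = g^{ab} R_{ab}. -/
def Scal (x : Pt n) : ℝ := ∑ a, ∑ b, G.ginv x a b * G.Ricci a b x

/-- Schouten tensor P_{ab} = (1/(n−2)) (R_{ab} − R/(2(n−1)) g_{ab}). -/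
def Schouten (a b : Fin n) (x : Pt n) : ℝ :=
  (1 / ((n : ℝ) - 2)) * (G.Ricci a b x - G.Scal x / (2 * ((n : ℝ) - 1)) * G.g x a b)

/-- Weyl tensor C_{abcd} = R_{abcd} − 2(g_{c[a}P_{b]d} + g_{d[b}P_{a]c}). -/
def Weyl (a b c d : Fin n) (x : Pt n) : ℝ :=
  G.Riem4 a b c d x -
    (G.g x c a * G.Schouten b d x - G.g x c b * G.Schouten a d x
      + G.g x d b * G.Schouten a c x - G.g x d a * G.Schouten b c x)

/-- Cotton tensor A_{abc} = ∇_b P_{ca} − ∇_c P_{ba} (= 2∇_{[b}P_{c]a}). -/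
def Cotton (a b c : Fin n) (x : Pt n) : ℝ :=
  G.cov2 (fun y i j => G.Schouten i j y) b c a x - G.cov2 (fun y i j => G.Schouten i j y) c b a x

/-- Bach tensor B_{ab} = ∇^c A_{acb} + P^{dc} C_{dacb}. -/
def Bach (a b : Fin n) (x : Pt n) : ℝ :=
  (∑ c, ∑ e, G.ginv x c e * G.cov3 (fun y i j k => G.Cotton i j k y) e a c b x)
    + ∑ d, ∑ c, (∑ i, ∑ j, G.ginv x d i * G.ginv x c j * G.Schouten i j x) * G.Weyl d a c b x

/-- `K` is a null vector field. -/
def IsNull (K : Pt n → Pt n) : Prop := ∀ x, G.ip x (K x) (K x) = 0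

/-- Pure radiation condition: Ric(X,·) = 0 for every vector X orthogonal to K. -/
def PureRadiation (K : Pt n → Pt n) : Prop :=
  ∀ x (X : Pt n), G.ip x (K x) X = 0 → ∀ b, (∑ a, G.Ricci a b x * X a) = 0

/-- Parallel rays condition: ∇_a K^b = f_a K^b. -/
def ParallelRays (K : Pt n → Pt n) (f : Pt n → Fin n → ℝ) : Prop :=
  ∀ x a b, G.covVec K a b x = f x a * K x b

/-- first (ℝ-) component of the tractor derivative of the tractor (ρ, X, σ):
∇_a ρ − P_{ab} X^b. -/
def trD0 (ρ : Pt n → ℝ) (X : Pt n → Pt n) (a : Fin n) (x : Pt n) : ℝ :=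
  pd a ρ x - ∑ b, G.Schouten a b x * X x b

/-- middle (TM-) component of the tractor derivative of the tractor (ρ, X, σ):
∇_a X^b + ρ δ_a{}^b + σ P_a{}^b. -/
def trD1 (ρ : Pt n → ℝ) (X : Pt n → Pt n) (σ : Pt n → ℝ) (a b : Fin n) (x : Pt n) : ℝ :=
  G.covVec X a b x + ρ x * (if a = b then (1:ℝ) else 0)
    + σ x * ∑ e, G.ginv x b e * G.Schouten a e x

/-- last (ℝ-) component of the tractor derivative of the tractor (ρ, X, σ):
∇_a σ − g_{ab} X^b. -/
def trD2 (X : Pt n → Pt n) (σ : Pt n → ℝ) (a : Fin n) (x : Pt n) : ℝ :=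
  pd a σ x - ∑ b, G.g x a b * X x b

end MetricG

namespace Aux
variable {n : ℕ}

lemma pd_congr {f g : Pt n → ℝ} (h : ∀ x, f x = g x) (a : Fin n) (x : Pt n) :
    pd a f x = pd a g x := by
  have : f = g := funext h
  rw [pd, pd, this]

lemma pd_const (a : Fin n) (c : ℝ) (x : Pt n) : pd a (fun _ => c) x = 0 := by
  simp [pd]

lemma pd_add {f g : Pt n → ℝ} {x : Pt n} (hf : DifferentiableAt ℝ f x)
    (hg : DifferentiableAt ℝ g x) (a : Fin n) :
    pd a (fun y => f y + g y) x = pd a f x + pd a g x := by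
  simp [pd, fderiv_fun_add hf hg]

lemma pd_sub {f g : Pt n → ℝ} {x : Pt n} (hf : DifferentiableAt ℝ f x)
    (hg : DifferentiableAt ℝ g x) (a : Fin n) :
    pd a (fun y => f y - g y) x = pd a f x - pd a g x := by
  simp [pd, fderiv_fun_sub hf hg]

lemma pd_mul {f g : Pt n → ℝ} {x : Pt n} (hf : DifferentiableAt ℝ f x)
    (hg : DifferentiableAt ℝ g x) (a : Fin n) :
    pd a (fun y => f y * g y) x = pd a f x * g x + f x * pd a g x := by
  simp [pd, fderiv_fun_mul hf hg]; ring

lemma pd_cmul {f : Pt n → ℝ} {x : Pt n} (c : ℝ) (hf : DifferentiableAt ℝ f x) (a : Fin n) :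
    pd a (fun y => c * f y) x = c * pd a f x := by
  rw [pd_mul (differentiableAt_const c) hf, pd_const]; ring

lemma pd_sum {ι : Type*} {s : Finset ι} {f : ι → Pt n → ℝ} {x : Pt n}
    (h : ∀ i ∈ s, DifferentiableAt ℝ (f i) x) (a : Fin n) :
    pd a (fun y => ∑ i ∈ s, f i y) x = ∑ i ∈ s, pd a (f i) x := by
  classical
  induction s using Finset.induction_on with
  | empty => simp [pd_const]
  | @insert j s' hni ih =>
    rw [Finset.sum_insert hni]
    have h1 : DifferentiableAt ℝ (f j) x := h _ (Finset.mem_insert_self _ _)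
    have h2 : DifferentiableAt ℝ (fun y => ∑ i ∈ s', f i y) x :=
      DifferentiableAt.fun_sum (fun i hi => h _ (Finset.mem_insert_of_mem hi))
    rw [show (fun y => ∑ i ∈ insert j s', f i y) = fun y => f j y + ∑ i ∈ s', f i y from
      funext fun y => Finset.sum_insert hni, pd_add h1 h2,
      ih (fun i hi => h _ (Finset.mem_insert_of_mem hi))]

lemma ContDiff.pd_smooth {f : Pt n → ℝ} (hf : ContDiff ℝ (⊤ : ℕ∞) f) (a : Fin n) :
    ContDiff ℝ (⊤ : ℕ∞) (fun x => pd a f x) :=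
  (hf.fderiv_right (by simp)).clm_apply contDiff_const

/-- Schwarz symmetry of second partial derivatives for smooth functions. -/
lemma pd_comm {f : Pt n → ℝ} (hf : ContDiff ℝ (⊤ : ℕ∞) f) (a b : Fin n) (x : Pt n) :
    pd a (fun y => pd b f y) x = pd b (fun y => pd a f y) x := by
  have hdf : ContDiff ℝ (⊤ : ℕ∞) (fderiv ℝ f) := hf.fderiv_right (by simp)
  have hdfx : DifferentiableAt ℝ (fderiv ℝ f) x := hdf.differentiable (by simp) x
  have hev : ∀ v w : Pt n,
      fderiv ℝ (fun y => fderiv ℝ f y v) x w = fderiv ℝ (fderiv ℝ f) x w v := by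
    intro v w
    rw [fderiv_clm_apply hdfx (differentiableAt_const v)]
    simp
  have hsymm : ∀ v w : Pt n,
      fderiv ℝ (fderiv ℝ f) x v w = fderiv ℝ (fderiv ℝ f) x w v := by
    intro v w
    exact second_derivative_symmetric
      (fun y => (hf.differentiable (by simp) y).hasFDerivAt)
      hdfx.hasFDerivAt v w
  show fderiv ℝ (fun y => fderiv ℝ f y (Pi.single b 1)) x (Pi.single a 1)
      = fderiv ℝ (fun y => fderiv ℝ f y (Pi.single a 1)) x (Pi.single b 1)
  rw [hev, hev, hsymm]

end Aux

section Matrices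
open Aux Matrix
variable {n : ℕ} (G : MetricG n)

/-- The metric as a matrix-valued function. -/
def gmat (x : Pt n) : Matrix (Fin n) (Fin n) ℝ := Matrix.of (G.g x)
def gimat (x : Pt n) : Matrix (Fin n) (Fin n) ℝ := Matrix.of (G.ginv x)

lemma gimat_mul (x : Pt n) : gimat G x * gmat G x = 1 := by
  ext a c
  simp [Matrix.mul_apply, gimat, gmat, Matrix.one_apply, G.inv_mul x a c]

lemma gmat_mul (x : Pt n) : gmat G x * gimat G x = 1 :=
  mul_eq_one_comm.2 (gimat_mul G x)

/-- g · ginv = δ componentwise. -/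
lemma mul_inv' (x : Pt n) (a c : Fin n) :
    (∑ b, G.g x a b * G.ginv x b c) = if a = c then (1:ℝ) else 0 := by
  have := congrArg (fun M => M a c) (gmat_mul G x)
  simpa [Matrix.mul_apply, gimat, gmat, Matrix.one_apply] using this

lemma gimat_eq_inv (x : Pt n) : gimat G x = (gmat G x)⁻¹ :=
  (Matrix.inv_eq_left_inv (gimat_mul G x)).symm

lemma ginv_symm (x : Pt n) (a b : Fin n) : G.ginv x a b = G.ginv x b a := by
  have hsym : (gmat G x)ᵀ = gmat G x := by
    ext i j; exact G.symm x j i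
  have : (gimat G x)ᵀ = gimat G x := by
    rw [gimat_eq_inv, Matrix.transpose_nonsing_inv, hsym]
  have h2 := congrArg (fun M => M b a) this
  simpa [gimat, Matrix.transpose_apply] using h2

lemma isUnit_det (x : Pt n) : IsUnit ((gmat G x).det) :=
  Matrix.isUnit_det_of_left_inverse (gimat_mul G x)

lemma contDiff_det {m : ℕ} {M : Pt n → Matrix (Fin m) (Fin m) ℝ}
    (h : ∀ a b, ContDiff ℝ (⊤ : ℕ∞) (fun x => M x a b)) :
    ContDiff ℝ (⊤ : ℕ∞) (fun x => (M x).det) := by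
  have : (fun x => (M x).det)
      = fun x => ∑ σ : Equiv.Perm (Fin m), ((Equiv.Perm.sign σ : ℤ) : ℝ) * ∏ i, M x (σ i) i := by
    funext x
    rw [Matrix.det_apply]
    simp [Units.smul_def, zsmul_eq_mul]
  rw [this]
  exact ContDiff.sum fun σ _ =>
    (contDiff_const.mul (contDiff_prod fun i _ => h (σ i) i))

lemma ginv_smooth (a b : Fin n) : ContDiff ℝ (⊤ : ℕ∞) (fun x => G.ginv x a b) := by
  have hdet : ContDiff ℝ (⊤ : ℕ∞) (fun x => (gmat G x).det) :=
    contDiff_det (fun a b => by simpa [gmat] using G.smooth a b)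
  have hdet0 : ∀ x, (gmat G x).det ≠ 0 := fun x => (isUnit_det G x).ne_zero
  have hadj : ContDiff ℝ (⊤ : ℕ∞) (fun x => (gmat G x).adjugate a b) := by
    have : (fun x => (gmat G x).adjugate a b)
        = fun x => ((gmat G x).updateRow b (Pi.single a 1)).det := by
      funext x; rw [Matrix.adjugate_apply]
    rw [this]
    refine contDiff_det fun i j => ?_
    rcases eq_or_ne i b with rfl | hib
    · simp only [Matrix.updateRow_self]
      exact contDiff_const
    · simp only [Matrix.updateRow_ne hib]
      simpa [gmat] using G.smooth i j
  have : (fun x => G.ginv x a b)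
      = fun x => ((gmat G x).det)⁻¹ * (gmat G x).adjugate a b := by
    funext x
    have := congrArg (fun M => M a b) (gimat_eq_inv G x)
    simp only [gimat, Matrix.of_apply] at this
    rw [this, Matrix.inv_def]
    simp [Ring.inverse_eq_inv, Matrix.smul_apply, smul_eq_mul]
  rw [this]
  exact (hdet.inv hdet0).mul hadj

end Matrices


section Curv
open Aux
variable {n : ℕ} (G : MetricG n)

lemma g_diff (a b : Fin n) (x : Pt n) : DifferentiableAt ℝ (fun y => G.g y a b) x :=
  ((G.smooth a b).differentiable (by simp)) x

lemma gi_diff (a b : Fin n) (x : Pt n) : DifferentiableAt ℝ (fun y => G.ginv y a b) x :=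
  ((ginv_smooth G a b).differentiable (by simp)) x

lemma sum_delta_mul (f : Fin n → ℝ) (p : Fin n) :
    (∑ m, f m * (if m = p then (1:ℝ) else 0)) = f p := by
  simp

lemma sum4_swap (F : Fin n → Fin n → Fin n → Fin n → ℝ) :
    (∑ c, ∑ e, ∑ m, ∑ p, F c e m p) = ∑ m, ∑ p, ∑ c, ∑ e, F c e m p := by
  have h1 : ∀ c, (∑ e, ∑ m, ∑ p, F c e m p) = ∑ m, ∑ e, ∑ p, F c e m p :=
    fun c => Finset.sum_comm
  simp_rw [h1]
  rw [Finset.sum_comm]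
  refine Finset.sum_congr rfl fun m _ => ?_
  have h2 : ∀ c, (∑ e, ∑ p, F c e m p) = ∑ p, ∑ e, F c e m p := fun c => Finset.sum_comm
  simp_rw [h2]
  exact Finset.sum_comm

/-- Derivative of the inverse metric. -/
lemma pd_ginv (b c p : Fin n) (x : Pt n) :
    pd b (fun y => G.ginv y c p) x
      = -∑ m, ∑ e, G.ginv x c m * pd b (fun y => G.g y m e) x * G.ginv x e p := by
  have h0 : ∀ e, (∑ m, pd b (fun y => G.ginv y c m) x * G.g x m e)
      = -∑ m, G.ginv x c m * pd b (fun y => G.g y m e) x := by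
    intro e
    have hconst : pd b (fun y => ∑ m, G.ginv y c m * G.g y m e) x = 0 := by
      rw [pd_congr (fun y => G.inv_mul y c e) b x]
      exact pd_const _ _ _
    have hexp : pd b (fun y => ∑ m, G.ginv y c m * G.g y m e) x
        = ∑ m, (pd b (fun y => G.ginv y c m) x * G.g x m e
            + G.ginv x c m * pd b (fun y => G.g y m e) x) := by
      rw [pd_sum (f := fun m y => G.ginv y c m * G.g y m e) (fun m _ => (gi_diff G c m x).mul (g_diff G m e x))]
      exact Finset.sum_congr rfl fun m _ => pd_mul (gi_diff G c m x) (g_diff G m e x) b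
    rw [hexp, Finset.sum_add_distrib] at hconst
    linarith
  calc pd b (fun y => G.ginv y c p) x
      = ∑ m, pd b (fun y => G.ginv y c m) x * (if m = p then (1:ℝ) else 0) :=
        (sum_delta_mul (fun m => pd b (fun y => G.ginv y c m) x) p).symm
    _ = ∑ m, pd b (fun y => G.ginv y c m) x * (∑ e, G.g x m e * G.ginv x e p) :=
        Finset.sum_congr rfl fun m _ => by rw [mul_inv' G x m p]
    _ = ∑ e, (∑ m, pd b (fun y => G.ginv y c m) x * G.g x m e) * G.ginv x e p := by
        simp_rw [Finset.mul_sum, Finset.sum_mul]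
        rw [Finset.sum_comm]
        exact Finset.sum_congr rfl fun e _ => Finset.sum_congr rfl fun m _ => by ring
    _ = ∑ e, (-∑ m, G.ginv x c m * pd b (fun y => G.g y m e) x) * G.ginv x e p :=
        Finset.sum_congr rfl fun e _ => by rw [h0 e]
    _ = -∑ m, ∑ e, G.ginv x c m * pd b (fun y => G.g y m e) x * G.ginv x e p := by
        simp_rw [neg_mul, Finset.sum_mul, ← Finset.sum_neg_distrib]
        rw [Finset.sum_comm]

lemma Gamma_symm (c a b : Fin n) (x : Pt n) : G.Γ c a b x = G.Γ c b a x := by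
  unfold MetricG.Γ
  congr 1
  refine Finset.sum_congr rfl fun d _ => ?_
  rw [pd_congr (fun y => G.symm y a b) d x]
  ring

lemma Gamma_smooth (c a b : Fin n) : ContDiff ℝ (⊤ : ℕ∞) (fun x => G.Γ c a b x) := by
  unfold MetricG.Γ
  refine contDiff_const.mul (ContDiff.sum fun d _ => (ginv_smooth G c d).mul ?_)
  exact ((ContDiff.pd_smooth (G.smooth d b) a).add
    (ContDiff.pd_smooth (G.smooth d a) b)).sub (ContDiff.pd_smooth (G.smooth a b) d)

lemma Gamma_diff (c a b : Fin n) (x : Pt n) : DifferentiableAt ℝ (fun y => G.Γ c a b y) x :=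
  ((Gamma_smooth G c a b).differentiable (by simp)) x

/-- Contracted Christoffel identity: ∑_c Γ^c_{cd} = ½ ∑ g^{ce} ∂_d g_{ce}. -/
lemma traceGamma (d : Fin n) (x : Pt n) :
    (∑ c, G.Γ c c d x)
      = (1/2) * ∑ c, ∑ e, G.ginv x c e * pd d (fun y => G.g y c e) x := by
  have e1 : (∑ c, G.Γ c c d x)
      = (1/2) * ∑ c, ∑ e, G.ginv x c e *
          (pd c (fun y => G.g y e d) x + pd d (fun y => G.g y e c) x
            - pd e (fun y => G.g y c d) x) := by
    rw [Finset.mul_sum]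
    exact Finset.sum_congr rfl fun c _ => by rw [MetricG.Γ]
  have S13 : (∑ c, ∑ e, G.ginv x c e * pd c (fun y => G.g y e d) x)
      = ∑ c, ∑ e, G.ginv x c e * pd e (fun y => G.g y c d) x := by
    rw [Finset.sum_comm]
    exact Finset.sum_congr rfl fun c _ => Finset.sum_congr rfl fun e _ => by
      rw [ginv_symm G x c e]
  have S2 : (∑ c, ∑ e, G.ginv x c e * pd d (fun y => G.g y e c) x)
      = ∑ c, ∑ e, G.ginv x c e * pd d (fun y => G.g y c e) x :=
    Finset.sum_congr rfl fun c _ => Finset.sum_congr rfl fun e _ => by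
      rw [pd_congr (fun y => G.symm y e c) d x]
  have e2 : (∑ c, ∑ e, G.ginv x c e *
      (pd c (fun y => G.g y e d) x + pd d (fun y => G.g y e c) x
        - pd e (fun y => G.g y c d) x))
      = (∑ c, ∑ e, G.ginv x c e * pd c (fun y => G.g y e d) x)
        + (∑ c, ∑ e, G.ginv x c e * pd d (fun y => G.g y e c) x)
        - (∑ c, ∑ e, G.ginv x c e * pd e (fun y => G.g y c d) x) := by
    simp_rw [mul_sub, mul_add, Finset.sum_sub_distrib, Finset.sum_add_distrib]
  rw [e1, e2, S13, S2]
  ring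

/-- Symmetry of the derivative of the contracted Christoffel symbol. -/
lemma traceGamma_pd_symm (b d : Fin n) (x : Pt n) :
    (∑ c, pd b (fun y => G.Γ c c d y) x) = ∑ c, pd d (fun y => G.Γ c c b y) x := by
  have key : ∀ b d : Fin n, (∑ c, pd b (fun y => G.Γ c c d y) x)
      = (1/2) * (∑ c, ∑ e, pd b (fun y => G.ginv y c e) x * pd d (fun z => G.g z c e) x)
        + (1/2) * (∑ c, ∑ e, G.ginv x c e *
            pd b (fun y => pd d (fun z => G.g z c e) y) x) := by
    intro b d
    have hps : ∀ c e : Fin n, ContDiff ℝ (⊤ : ℕ∞)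
        (fun y => G.ginv y c e * pd d (fun z => G.g z c e) y) := fun c e =>
      (ginv_smooth G c e).mul (ContDiff.pd_smooth (G.smooth c e) d)
    have hsum : ∀ c : Fin n, DifferentiableAt ℝ
        (fun y => ∑ e, G.ginv y c e * pd d (fun z => G.g z c e) y) x := fun c =>
      DifferentiableAt.fun_sum fun e _ => ((hps c e).differentiable (by simp)) x
    calc (∑ c, pd b (fun y => G.Γ c c d y) x)
        = pd b (fun y => ∑ c, G.Γ c c d y) x :=
          (pd_sum (fun c _ => Gamma_diff G c c d x) b).symm
      _ = pd b (fun y => (1/2) * ∑ c, ∑ e, G.ginv y c e * pd d (fun z => G.g z c e) y) x :=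
          pd_congr (fun y => traceGamma G d y) b x
      _ = (1/2) * pd b (fun y => ∑ c, ∑ e, G.ginv y c e * pd d (fun z => G.g z c e) y) x :=
          pd_cmul _ (DifferentiableAt.fun_sum fun c _ => hsum c) b
      _ = (1/2) * ∑ c, pd b (fun y => ∑ e, G.ginv y c e * pd d (fun z => G.g z c e) y) x := by
          rw [pd_sum (fun c _ => hsum c) b]
      _ = (1/2) * ∑ c, ∑ e, pd b (fun y => G.ginv y c e * pd d (fun z => G.g z c e) y) x := by
          congr 1
          exact Finset.sum_congr rfl fun c _ => pd_sum
            (fun e _ => ((hps c e).differentiable (by simp)) x) b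
      _ = (1/2) * ∑ c, ∑ e, (pd b (fun y => G.ginv y c e) x * pd d (fun z => G.g z c e) x
            + G.ginv x c e * pd b (fun y => pd d (fun z => G.g z c e) y) x) := by
          congr 1
          exact Finset.sum_congr rfl fun c _ => Finset.sum_congr rfl fun e _ =>
            pd_mul (gi_diff G c e x)
              (((ContDiff.pd_smooth (G.smooth c e) d).differentiable (by simp)) x) b
      _ = (1/2) * (∑ c, ∑ e, pd b (fun y => G.ginv y c e) x * pd d (fun z => G.g z c e) x)
          + (1/2) * (∑ c, ∑ e, G.ginv x c e *
              pd b (fun y => pd d (fun z => G.g z c e) y) x) := by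
          simp_rw [Finset.sum_add_distrib]
          try ring
  have piece2 : (∑ c, ∑ e, G.ginv x c e * pd b (fun y => pd d (fun z => G.g z c e) y) x)
      = ∑ c, ∑ e, G.ginv x c e * pd d (fun y => pd b (fun z => G.g z c e) y) x :=
    Finset.sum_congr rfl fun c _ => Finset.sum_congr rfl fun e _ => by
      rw [pd_comm (G.smooth c e) b d x]
  have piece1 : (∑ c, ∑ e, pd b (fun y => G.ginv y c e) x * pd d (fun z => G.g z c e) x)
      = ∑ c, ∑ e, pd d (fun y => G.ginv y c e) x * pd b (fun z => G.g z c e) x := by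
    have hsub : ∀ b' d' : Fin n,
        (∑ c, ∑ e, pd b' (fun y => G.ginv y c e) x * pd d' (fun z => G.g z c e) x)
        = -∑ c, ∑ e, ∑ m, ∑ p, G.ginv x c m * pd b' (fun y => G.g y m p) x
            * G.ginv x p e * pd d' (fun z => G.g z c e) x := by
      intro b' d'
      rw [← Finset.sum_neg_distrib]
      refine Finset.sum_congr rfl fun c _ => ?_
      rw [← Finset.sum_neg_distrib]
      refine Finset.sum_congr rfl fun e _ => ?_
      rw [pd_ginv G b' c e x]
      simp_rw [neg_mul, Finset.sum_mul]
    rw [hsub b d, hsub d b]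
    congr 1
    rw [sum4_swap]
    refine Finset.sum_congr rfl fun c _ => Finset.sum_congr rfl fun e _ =>
      Finset.sum_congr rfl fun m _ => Finset.sum_congr rfl fun p _ => ?_
    rw [ginv_symm G x m c, ginv_symm G x e p]
    ring
  rw [key b d, key d b, piece1, piece2]

/-- The Ricci tensor of the Levi-Civita connection is symmetric. -/
lemma Ricci_symm (b d : Fin n) (x : Pt n) : G.Ricci b d x = G.Ricci d b x := by
  have split : ∀ b d : Fin n, G.Ricci b d x
      = (∑ c, pd c (fun y => G.Γ c b d y) x) - (∑ c, pd b (fun y => G.Γ c c d y) x)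
        + ((∑ c, ∑ e, G.Γ c c e x * G.Γ e b d x)
          - (∑ c, ∑ e, G.Γ c b e x * G.Γ e c d x)) := by
    intro b d
    unfold MetricG.Ricci MetricG.Riem
    simp_rw [Finset.sum_sub_distrib, Finset.sum_add_distrib, Finset.sum_sub_distrib]
  have hA : (∑ c, pd c (fun y => G.Γ c b d y) x) = ∑ c, pd c (fun y => G.Γ c d b y) x :=
    Finset.sum_congr rfl fun c _ => pd_congr (fun y => Gamma_symm G c b d y) c x
  have hC : (∑ c, ∑ e, G.Γ c c e x * G.Γ e b d x)
      = ∑ c, ∑ e, G.Γ c c e x * G.Γ e d b x :=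
    Finset.sum_congr rfl fun c _ => Finset.sum_congr rfl fun e _ => by
      rw [Gamma_symm G e b d x]
  have hD : (∑ c, ∑ e, G.Γ c b e x * G.Γ e c d x)
      = ∑ c, ∑ e, G.Γ c d e x * G.Γ e c b x := by
    rw [Finset.sum_comm]
    refine Finset.sum_congr rfl fun c _ => Finset.sum_congr rfl fun e _ => ?_
    rw [Gamma_symm G e b c x, Gamma_symm G c e d x]
    ring
  rw [split b d, split d b, hA, hC, hD, traceGamma_pd_symm G b d x]

end Curv


section Alg
open Aux
variable {n : ℕ} (G : MetricG n) (K : Pt n → Pt n)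

/-- The one-form obtained by lowering the index of `K`. -/
def lowK (x : Pt n) (b : Fin n) : ℝ := ∑ e, G.g x b e * K x e

lemma lower_raise (x : Pt n) (b : Fin n) :
    (∑ e, G.ginv x b e * lowK G K x e) = K x b := by
  unfold lowK
  calc (∑ e, G.ginv x b e * ∑ m, G.g x e m * K x m)
      = ∑ e, ∑ m, G.ginv x b e * G.g x e m * K x m := by
        refine Finset.sum_congr rfl fun e _ => ?_
        rw [Finset.mul_sum]
        exact Finset.sum_congr rfl fun m _ => by ring
    _ = ∑ m, ∑ e, G.ginv x b e * G.g x e m * K x m := Finset.sum_comm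
    _ = ∑ m, (if b = m then (1:ℝ) else 0) * K x m := by
        refine Finset.sum_congr rfl fun m _ => ?_
        rw [← Finset.sum_mul, G.inv_mul x b m]
    _ = K x b := by simp

lemma lowK_ne_zero (hK0 : ∀ x, K x ≠ 0) (x : Pt n) : ∃ b, lowK G K x b ≠ 0 := by
  by_contra hall
  push_neg at hall
  apply hK0 x
  funext b
  have h := lower_raise G K x b
  simp only [hall, mul_zero, Finset.sum_const_zero] at h
  show K x b = 0
  exact h.symm

lemma ip_lowK (x : Pt n) (X : Pt n) :
    G.ip x (K x) X = ∑ b, lowK G K x b * X b := by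
  unfold MetricG.ip lowK
  rw [Finset.sum_comm]
  refine Finset.sum_congr rfl fun b _ => ?_
  rw [Finset.sum_mul]
  refine Finset.sum_congr rfl fun a _ => ?_
  rw [G.symm x b a]

lemma lowK_K (hnull : G.IsNull K) (x : Pt n) :
    (∑ b, lowK G K x b * K x b) = 0 := by
  rw [← ip_lowK]
  exact hnull x

lemma Ric_decomp (hn : 2 < n) (a b : Fin n) (x : Pt n) :
    G.Ricci a b x = ((n:ℝ) - 2) * G.Schouten a b x
      + G.Scal x / (2 * ((n:ℝ) - 1)) * G.g x a b := by
  have h2 : ((n:ℝ) - 2) ≠ 0 := by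
    have : (2:ℝ) < n := by exact_mod_cast hn
    linarith
  unfold MetricG.Schouten
  field_simp
  ring

lemma trace_ginv_g (x : Pt n) : (∑ a, ∑ b, G.ginv x a b * G.g x a b) = (n:ℝ) := by
  have : ∀ a : Fin n, (∑ b, G.ginv x a b * G.g x a b) = 1 := by
    intro a
    have h := G.inv_mul x a a
    simp only [if_true, eq_self_iff_true] at h
    rw [← h]
    exact Finset.sum_congr rfl fun b _ => by rw [G.symm x a b]
  simp [this]

lemma Schouten_symm (a b : Fin n) (x : Pt n) : G.Schouten a b x = G.Schouten b a x := by
  unfold MetricG.Schouten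
  rw [Ricci_symm G a b x, G.symm x a b]

/-- If the Ricci tensor at `x` is `ψ Kl⊗Kl` then the scalar curvature vanishes at `x`. -/
lemma scal_zero_of_ric (hnull : G.IsNull K) (x : Pt n) (ψ : ℝ)
    (hq : ∀ a b, G.Ricci a b x = ψ * lowK G K x a * lowK G K x b) : G.Scal x = 0 := by
  unfold MetricG.Scal
  have : ∀ a : Fin n, (∑ b, G.ginv x a b * G.Ricci a b x)
      = ψ * lowK G K x a * K x a := by
    intro a
    calc (∑ b, G.ginv x a b * G.Ricci a b x)
        = ∑ b, ψ * lowK G K x a * (G.ginv x a b * lowK G K x b) := by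
          refine Finset.sum_congr rfl fun b _ => ?_
          rw [hq a b]; ring
      _ = ψ * lowK G K x a * ∑ b, G.ginv x a b * lowK G K x b := by
          rw [Finset.mul_sum]
      _ = ψ * lowK G K x a * K x a := by rw [lower_raise G K x a]
  simp_rw [this]
  calc (∑ a, ψ * lowK G K x a * K x a)
      = ψ * ∑ a, lowK G K x a * K x a := by
        rw [Finset.mul_sum]
        exact Finset.sum_congr rfl fun a _ => by ring
    _ = 0 := by rw [lowK_K G K hnull x, mul_zero]

/-- If the Schouten tensor at `x` is `φ Kl⊗Kl` then the scalar curvature vanishes at `x`. -/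
lemma scal_zero_of_schouten (hn : 2 < n) (hnull : G.IsNull K) (x : Pt n) (φ : ℝ)
    (hP : ∀ a b, G.Schouten a b x = φ * lowK G K x a * lowK G K x b) : G.Scal x = 0 := by
  have hnR : (2:ℝ) < (n:ℝ) := by exact_mod_cast hn
  have hPtr : (∑ a, ∑ b, G.ginv x a b * G.Schouten a b x) = 0 := by
    have : ∀ a : Fin n, (∑ b, G.ginv x a b * G.Schouten a b x)
        = φ * lowK G K x a * K x a := by
      intro a
      calc (∑ b, G.ginv x a b * G.Schouten a b x)
          = ∑ b, φ * lowK G K x a * (G.ginv x a b * lowK G K x b) := by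
            refine Finset.sum_congr rfl fun b _ => ?_
            rw [hP a b]; ring
        _ = φ * lowK G K x a * ∑ b, G.ginv x a b * lowK G K x b := by rw [Finset.mul_sum]
        _ = φ * lowK G K x a * K x a := by rw [lower_raise G K x a]
    simp_rw [this]
    calc (∑ a, φ * lowK G K x a * K x a)
        = φ * ∑ a, lowK G K x a * K x a := by
          rw [Finset.mul_sum]
          exact Finset.sum_congr rfl fun a _ => by ring
      _ = 0 := by rw [lowK_K G K hnull x, mul_zero]
  have hscal : G.Scal x = ((n:ℝ) - 2) * (∑ a, ∑ b, G.ginv x a b * G.Schouten a b x)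
      + G.Scal x / (2 * ((n:ℝ) - 1)) * (n:ℝ) := by
    conv_lhs => rw [MetricG.Scal]
    calc (∑ a, ∑ b, G.ginv x a b * G.Ricci a b x)
        = ∑ a, ∑ b, (((n:ℝ) - 2) * (G.ginv x a b * G.Schouten a b x)
            + G.Scal x / (2 * ((n:ℝ) - 1)) * (G.ginv x a b * G.g x a b)) := by
          refine Finset.sum_congr rfl fun a _ => Finset.sum_congr rfl fun b _ => ?_
          rw [Ric_decomp G hn a b x]; ring
      _ = ((n:ℝ) - 2) * (∑ a, ∑ b, G.ginv x a b * G.Schouten a b x)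
          + G.Scal x / (2 * ((n:ℝ) - 1)) * (∑ a, ∑ b, G.ginv x a b * G.g x a b) := by
          simp_rw [Finset.sum_add_distrib, Finset.mul_sum]
      _ = ((n:ℝ) - 2) * (∑ a, ∑ b, G.ginv x a b * G.Schouten a b x)
          + G.Scal x / (2 * ((n:ℝ) - 1)) * (n:ℝ) := by
          rw [trace_ginv_g G x]
  rw [hPtr, mul_zero, zero_add] at hscal
  have h1 : (2 * ((n:ℝ) - 1)) ≠ 0 := by linarith
  have e : G.Scal x / (2 * ((n:ℝ) - 1)) * (2 * ((n:ℝ) - 1)) = G.Scal x := div_mul_cancel₀ _ h1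
  have h3 : G.Scal x * ((n:ℝ) - 2) = 0 := by
    linear_combination (2 * ((n:ℝ) - 1)) * hscal + (n:ℝ) * e
  rcases mul_eq_zero.1 h3 with h | h
  · exact h
  · exfalso; linarith

end Alg


section Main
open Aux
variable {n : ℕ} (G : MetricG n) (K : Pt n → Pt n)

lemma K_diff (hKs : SmoothVF K) (b : Fin n) (x : Pt n) :
    DifferentiableAt ℝ (fun y => K y b) x := ((hKs b).differentiable (by simp)) x

lemma covVec_smul (hKs : SmoothVF K) (lam : Pt n → ℝ) (hlam : Differentiable ℝ lam)
    (a b : Fin n) (x : Pt n) :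
    G.covVec (fun y => lam y • K y) a b x
      = pd a lam x * K x b + lam x * G.covVec K a b x := by
  unfold MetricG.covVec
  have h1 : (fun y => (lam y • K y) b) = fun y => lam y * K y b := by
    funext y; simp [Pi.smul_apply, smul_eq_mul]
  rw [h1, pd_mul (hlam x) (K_diff K hKs b x) a]
  have h3 : (∑ c, G.Γ b a c x * (lam x • K x) c) = lam x * ∑ c, G.Γ b a c x * K x c := by
    rw [Finset.mul_sum]
    refine Finset.sum_congr rfl fun c _ => ?_
    simp [Pi.smul_apply, smul_eq_mul]
    ring
  rw [h3]
  ring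

/-- If the raised Schouten tensor is proportional to K at each index, the Schouten tensor
has the pure-radiation form. -/
lemma schouten_structure_of_up (hK0 : ∀ x, K x ≠ 0) (x : Pt n)
    (hup : ∀ a : Fin n, ∃ c : ℝ, ∀ b, (∑ e, G.ginv x b e * G.Schouten a e x) = c * K x b) :
    ∃ φ : ℝ, ∀ a b, G.Schouten a b x = φ * lowK G K x a * lowK G K x b := by
  choose c hc using hup
  have hlow : ∀ a b, G.Schouten a b x = c a * lowK G K x b := by
    intro a b
    calc G.Schouten a b x
        = ∑ m, (if b = m then (1:ℝ) else 0) * G.Schouten a m x := by simp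
      _ = ∑ m, (∑ e, G.g x b e * G.ginv x e m) * G.Schouten a m x := by
          refine Finset.sum_congr rfl fun m _ => ?_
          rw [mul_inv' G x b m]
      _ = ∑ e, G.g x b e * (∑ m, G.ginv x e m * G.Schouten a m x) := by
          simp_rw [Finset.sum_mul, Finset.mul_sum]
          rw [Finset.sum_comm]
          exact Finset.sum_congr rfl fun e _ => Finset.sum_congr rfl fun m _ => by ring
      _ = ∑ e, G.g x b e * (c a * K x e) := by
          refine Finset.sum_congr rfl fun e _ => ?_
          rw [hc a e]
      _ = c a * lowK G K x b := by
          unfold lowK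
          rw [Finset.mul_sum]
          exact Finset.sum_congr rfl fun e _ => by ring
  obtain ⟨b0, hb0⟩ := lowK_ne_zero G K hK0 x
  refine ⟨c b0 / lowK G K x b0, fun a b => ?_⟩
  have hsym : c a * lowK G K x b0 = c b0 * lowK G K x a :=
    (hlow a b0).symm.trans ((Schouten_symm G a b0 x).trans (hlow b0 a))
  rw [hlow a b]
  have hca : c a = c b0 / lowK G K x b0 * lowK G K x a := by
    field_simp
    linear_combination hsym
  rw [hca]

/-- Pure radiation forces the Ricci tensor to have the form ψ Kl⊗Kl. -/
lemma ric_structure (hK0 : ∀ x, K x ≠ 0) (x : Pt n) (hpr : G.PureRadiation K) :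
    ∃ ψ : ℝ, ∀ a b, G.Ricci a b x = ψ * lowK G K x a * lowK G K x b := by
  obtain ⟨b0, hb0⟩ := lowK_ne_zero G K hK0 x
  have claim : ∀ a b, G.Ricci a b x = lowK G K x a / lowK G K x b0 * G.Ricci b0 b x := by
    intro a b
    set μ := lowK G K x a / lowK G K x b0 with hμ
    set X : Pt n := fun i => (if i = a then (1:ℝ) else 0) - μ * (if i = b0 then 1 else 0)
      with hX
    have key : ∀ F : Fin n → ℝ, (∑ i, F i * X i) = F a - μ * F b0 := by
      intro F
      have e : ∀ i, F i * X i
          = (if i = a then F i else 0) - μ * (if i = b0 then F i else 0) := by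
        intro i
        simp only [hX]
        split_ifs <;> ring
      simp_rw [e, Finset.sum_sub_distrib, ← Finset.mul_sum,
        Finset.sum_ite_eq' Finset.univ]
      simp
    have hip : G.ip x (K x) X = 0 := by
      rw [ip_lowK G K x X, key (fun i => lowK G K x i), hμ,
        div_mul_cancel₀ _ hb0, sub_self]
    have h := hpr x X hip b
    rw [key (fun i => G.Ricci i b x)] at h
    linarith
  refine ⟨G.Ricci b0 b0 x / (lowK G K x b0 * lowK G K x b0), fun a b => ?_⟩
  rw [claim a b, Ricci_symm G b0 b x, claim b b0]
  field_simp

end Main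


/-- Tractor characterisation, 'easy' direction: In the splitting of the
standard tractor bundle T = ℝ ⊕ TM ⊕ ℝ determined by g, with tractor connection
∇̄_a(ρ, X^b, σ) = (∇_aρ − P_{ab}X^b, ∇_aX^b + ρδ_a{}^b + σP_a{}^b, ∇_aσ − g_{ab}X^b),
the rank-2 subbundle H spanned by (0,K,0) and (0,0,1) is parallel (i.e. the derivative of
any section (0, λK, σ) of H again has vanishing first component and second component
proportional to K) if and only if g is a pure radiation metric with parallel rays
spanned by K. -/
theorem stmt_16 {n : ℕ} (hn : 2 < n) (G : MetricG n) (K : Pt n → Pt n)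
    (hKs : SmoothVF K) (hK0 : ∀ x, K x ≠ 0) (hnull : G.IsNull K) :
    (∀ lam sig : Pt n → ℝ, Differentiable ℝ lam → Differentiable ℝ sig →
        ∀ x a, G.trD0 (fun _ => (0:ℝ)) (fun y => lam y • K y) a x = 0 ∧
          ∃ l : ℝ, ∀ b, G.trD1 (fun _ => (0:ℝ)) (fun y => lam y • K y) sig a b x = l * K x b)
      ↔ (G.PureRadiation K ∧ ∃ f : Pt n → Fin n → ℝ, G.ParallelRays K f) := by
  constructor
  · -- parallel subbundle ⟹ pure radiation with parallel rays
    intro h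
    have hone : Differentiable ℝ (fun _ : Pt n => (1:ℝ)) := differentiable_const 1
    have hzero : Differentiable ℝ (fun _ : Pt n => (0:ℝ)) := differentiable_const 0
    have hKfun : (fun y => (fun _ : Pt n => (1:ℝ)) y • K y) = K := by
      funext y
      exact one_smul ℝ (K y)
    have hpar : ∀ x a, ∃ l : ℝ, ∀ b, G.covVec K a b x = l * K x b := by
      intro x a
      obtain ⟨l, hl⟩ := (h (fun _ => 1) (fun _ => 0) hone hzero x a).2
      refine ⟨l, fun b => ?_⟩
      have h1 := hl b
      unfold MetricG.trD1 at h1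
      rw [hKfun] at h1
      simpa using h1
    refine ⟨?_, fun x a => (hpar x a).choose, fun x a b => (hpar x a).choose_spec b⟩
    intro x X hX b
    have hup : ∀ a : Fin n, ∃ cc : ℝ, ∀ b,
        (∑ e, G.ginv x b e * G.Schouten a e x) = cc * K x b := by
      intro a
      obtain ⟨l', hl'⟩ := (h (fun _ => 1) (fun _ => 1) hone hone x a).2
      refine ⟨l' - (hpar x a).choose, fun b => ?_⟩
      have h1 := hl' b
      unfold MetricG.trD1 at h1
      rw [hKfun] at h1
      simp only [zero_mul, one_mul, add_zero, zero_add, mul_ite, mul_one, mul_zero,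
        ite_self] at h1
      have h2 := (hpar x a).choose_spec b
      rw [h2] at h1
      linear_combination h1
    obtain ⟨φ, hφ⟩ := schouten_structure_of_up G K hK0 x hup
    have hscal := scal_zero_of_schouten G K hn hnull x φ hφ
    have hric : ∀ a b, G.Ricci a b x
        = ((n:ℝ) - 2) * φ * lowK G K x a * lowK G K x b := by
      intro a b
      rw [Ric_decomp G hn a b x, hφ a b, hscal]
      ring
    have hipX : (∑ a, lowK G K x a * X a) = 0 := by
      rw [← ip_lowK G K x X]
      exact hX
    calc (∑ a, G.Ricci a b x * X a)
        = ∑ a, ((n:ℝ) - 2) * φ * lowK G K x b * (lowK G K x a * X a) := by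
          refine Finset.sum_congr rfl fun a _ => ?_
          rw [hric a b]
          ring
      _ = ((n:ℝ) - 2) * φ * lowK G K x b * ∑ a, lowK G K x a * X a := by
          rw [Finset.mul_sum]
      _ = 0 := by simp [hipX]
  · -- pure radiation with parallel rays ⟹ parallel subbundle
    rintro ⟨hpr, f, hf⟩
    intro lam sig hlam hsig x a
    obtain ⟨ψ, hψ⟩ := ric_structure G K hK0 x hpr
    have hscal := scal_zero_of_ric G K hnull x ψ hψ
    have hnz : ((n:ℝ) - 2) ≠ 0 := by
      have : (2:ℝ) < n := by exact_mod_cast hn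
      linarith
    have hP : ∀ a b, G.Schouten a b x
        = ψ / ((n:ℝ) - 2) * lowK G K x a * lowK G K x b := by
      intro a b
      unfold MetricG.Schouten
      rw [hψ a b, hscal]
      field_simp
      ring
    constructor
    · unfold MetricG.trD0
      rw [Aux.pd_const]
      have hterm : ∀ b, G.Schouten a b x * ((fun y => lam y • K y) x) b
          = ψ / ((n:ℝ) - 2) * lowK G K x a * lam x * (lowK G K x b * K x b) := by
        intro b
        rw [hP a b]
        simp only [Pi.smul_apply, smul_eq_mul]
        ring
      rw [Finset.sum_congr rfl fun b _ => hterm b, ← Finset.mul_sum,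
        lowK_K G K hnull x, mul_zero, sub_zero]
    · refine ⟨pd a lam x + lam x * f x a
        + sig x * (ψ / ((n:ℝ) - 2)) * lowK G K x a, fun b => ?_⟩
      unfold MetricG.trD1
      rw [covVec_smul G K hKs lam hlam a b x, hf x a b]
      have h3 : (∑ e, G.ginv x b e * G.Schouten a e x)
          = ψ / ((n:ℝ) - 2) * lowK G K x a * K x b := by
        calc (∑ e, G.ginv x b e * G.Schouten a e x)
            = ∑ e, ψ / ((n:ℝ) - 2) * lowK G K x a * (G.ginv x b e * lowK G K x e) := by
              refine Finset.sum_congr rfl fun e _ => ?_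
              rw [hP a e]
              ring
          _ = ψ / ((n:ℝ) - 2) * lowK G K x a * ∑ e, G.ginv x b e * lowK G K x e := by
              rw [Finset.mul_sum]
          _ = ψ / ((n:ℝ) - 2) * lowK G K x a * K x b := by
              rw [lower_raise G K x b]
      rw [h3]
      simp only [zero_mul, add_zero, zero_add, mul_ite, mul_one, mul_zero, ite_self]
      ring
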